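/- Suppose C ⊆ Pr(𝕋) is minimal with respect to the properties of being nonempty, weak*-compact, convex, and ˆ-closed, and suppose ⪯ is a linear quasi-order on 𝕋 such that s ≺ sˆt and t ≺ sˆt for all s,t ∈ 𝕋. If I ⊆ 𝕋 is an interval in (𝕋, ⪯) (i.e., s ⪯ t ⪯ u with s,u ∈ I implies t ∈ I), then either μ(I) = 1 for every μ ∈ C or μ(I) = 0 for every μ ∈ C. -/

import Mathlib

open scoped Classical

/-- The free binary system (free magma) on one generator. -/
abbrev 𝕋 : Type := FreeMagma Unit

/-- The generator `1` of `𝕋`. -/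
def e1 : 𝕋 := FreeMagma.of ()

/-- `#(t)`: the number of occurrences of the generator in `t`. -/
def cnt : 𝕋 → ℕ
  | FreeMagma.of _ => 1
  | FreeMagma.mul a b => cnt a + cnt b

/-- The space `ℓ^∞(S)` of bounded real-valued functions on `S`. -/
def Bdd (S : Type*) : Type _ := {f : S → ℝ // ∃ M, ∀ s, |f s| ≤ M}

/-- Package a function as an element of `Bdd S` (junk value if unbounded). -/
noncomputable def liftBdd {S : Type*} (g : S → ℝ) : Bdd S :=
  if h : ∃ M, ∀ s, |g s| ≤ M then ⟨g, h⟩ else ⟨fun _ => 0, 0, fun _ => by simp⟩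

/-- The constant function as an element of `Bdd S`. -/
def constB (S : Type*) (c : ℝ) : Bdd S := ⟨fun _ => c, |c|, fun _ => le_rfl⟩

/-- The characteristic function of `E` as an element of `Bdd S`. -/
noncomputable def indB {S : Type*} (E : Set S) : Bdd S :=
  liftBdd (fun s => if s ∈ E then 1 else 0)

/-- `Pr S`: finitely additive probability measures on `S`, identified with the
positive normalized linear functionals on `ℓ^∞(S)`.  The weak* topology is the
subspace topology inherited from the product topology on `Bdd S → ℝ`. -/
def PrSet (S : Type*) : Set (Bdd S → ℝ) :=
  {φ | (∀ f g h : Bdd S, (∀ s, h.1 s = f.1 s + g.1 s) → φ h = φ f + φ g) ∧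
       (∀ (c : ℝ) (f g : Bdd S), (∀ s, g.1 s = c * f.1 s) → φ g = c * φ f) ∧
       (∀ f : Bdd S, (∀ s, 0 ≤ f.1 s) → 0 ≤ φ f) ∧
       φ (constB S 1) = 1}

/-- `μ(E)`: the measure of a set `E ⊆ S`. -/
noncomputable def mE {S : Type*} (φ : Bdd S → ℝ) (E : Set S) : ℝ := φ (indB E)

/-- The product `μ ⊗ ν` of finitely additive measures:
`μ⊗ν(f) = μ(x ↦ ν(y ↦ f(x,y)))`. -/
noncomputable def prodM {S T : Type*} (φ : Bdd S → ℝ) (ψ : Bdd T → ℝ) :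
    Bdd (S × T) → ℝ :=
  fun f => φ (liftBdd fun x => ψ (liftBdd fun y => f.1 (x, y)))

/-- The extension of a binary operation `op` on `S` to `Pr S`:
`μ⋆ν(f) = μ(x ↦ ν(y ↦ f(x ⋆ y)))`. -/
noncomputable def starM {S : Type*} (op : S → S → S) (φ ψ : Bdd S → ℝ) :
    Bdd S → ℝ :=
  fun f => φ (liftBdd fun x => ψ (liftBdd fun y => f.1 (op x y)))

/-- The extension of `ˆ` to `Pr 𝕋`. -/
noncomputable def hmul (φ ψ : Bdd 𝕋 → ℝ) : Bdd 𝕋 → ℝ := starM (· * ·) φ ψ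

/-- Finitely supported probability measures: finite convex combinations of
point evaluations. -/
def FinSuppPr (S : Type*) : Set (Bdd S → ℝ) :=
  {φ | ∃ (F : Finset S) (w : S → ℝ), (∀ s ∈ F, 0 ≤ w s) ∧ (∑ s ∈ F, w s) = 1 ∧
      ∀ f : Bdd S, φ f = ∑ s ∈ F, w s * f.1 s}

/-- `𝔸_n`: finitely supported probability measures concentrated on `𝕋_n`. -/
def Asets (n : ℕ) : Set (Bdd 𝕋 → ℝ) :=
  {φ | ∃ (F : Finset 𝕋) (w : 𝕋 → ℝ), (∀ t ∈ F, cnt t = n) ∧ (∀ t ∈ F, 0 ≤ w t) ∧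
      (∑ t ∈ F, w t) = 1 ∧ ∀ f : Bdd 𝕋, φ f = ∑ t ∈ F, w t * f.1 t}

/-- The extension of `+` on `ℕ` to ultrafilters: `A ∈ U+V` iff
`{m : {n : m+n ∈ A} ∈ V} ∈ U`. -/
noncomputable def addU (U V : Ultrafilter ℕ) : Ultrafilter ℕ :=
  U.bind fun m => V.map fun n => m + n

/-- `𝔸_U`: the `U`-limit of the sets `𝔸_m`. -/
def AU (U : Ultrafilter ℕ) : Set (Bdd 𝕋 → ℝ) :=
  {μ | μ ∈ PrSet 𝕋 ∧ ∀ W : Set (Bdd 𝕋 → ℝ), IsOpen W → μ ∈ W →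
      {m : ℕ | (W ∩ Asets m).Nonempty} ∈ U}

/-- The extension of `ˆ` to ultrafilters on `𝕋`: `E ∈ UˆV` iff
`{u : {v : uˆv ∈ E} ∈ V} ∈ U`. -/
noncomputable def umul (U V : Ultrafilter 𝕋) : Ultrafilter 𝕋 :=
  U.bind fun u => V.map fun v => u * v

/-- Substitution of measures into a term `t`:
`t(μ_0,…,μ_{m-1})(f)` is the nested integral
`μ_0(x_0 ↦ ⋯ μ_{m-1}(x_{m-1} ↦ f(t(x⃗)))⋯)`. -/
noncomputable def substM : 𝕋 → List (Bdd 𝕋 → ℝ) → (Bdd 𝕋 → ℝ)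
  | FreeMagma.of _, μs => μs.headI
  | FreeMagma.mul a b, μs =>
      hmul (substM a (μs.take (cnt a))) (substM b (μs.drop (cnt a)))

/-- `t_k`: iteratively remove the carets of `t` involving only leaves of index
greater than `k`. -/
def tk : 𝕋 → ℕ → 𝕋
  | FreeMagma.of _, _ => e1
  | FreeMagma.mul a b, k => if k < cnt a then tk a k * e1 else a * tk b (k - cnt a)

/-- `l_k(t) = #(t_k) - 2` (truncated subtraction). -/
def lk (t : 𝕋) (k : ℕ) : ℕ := cnt (tk t k) - 2

/-- The subterm `t/σ` of `t` at address `σ` (`false` = left/`0`, `true` = right/`1`). -/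
def subT : 𝕋 → List Bool → Option 𝕋
  | t, [] => some t
  | FreeMagma.of _, _ :: _ => none
  | FreeMagma.mul a b, c :: σ => if c then subT b σ else subT a σ

/-- `σ <_lex ς` for incompatible binary sequences: at the first coordinate where
they differ, `σ` has `0` and `ς` has `1`. -/
def lexLT (σ ς : List Bool) : Prop :=
  ∃ p σ' ς', σ = p ++ (false :: σ') ∧ ς = p ++ (true :: ς')

/-- `x₀·E`. -/
def x0E (E : Set 𝕋) : Set 𝕋 :=
  {x | ∃ a b c : 𝕋, x = a * (b * c) ∧ (a * b) * c ∈ E}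

/-- `x₁·E`. -/
def x1E (E : Set 𝕋) : Set 𝕋 :=
  {x | ∃ s a b c : 𝕋, x = s * (a * (b * c)) ∧ s * ((a * b) * c) ∈ E}

/-- `u_σ` for a nonempty finite binary sequence `σ`. -/
def uSeq : List Bool → 𝕋
  | [] => e1
  | [_] => e1
  | b :: σ => if b then e1 * uSeq σ else uSeq σ * e1

/-- `a ≪ b`: for some `p`, `#(a) < 2^p` and `2^p` divides `#(b)`. -/
def ll (a b : 𝕋) : Prop := ∃ p : ℕ, cnt a < 2 ^ p ∧ 2 ^ p ∣ cnt b

/-- `r↾n`: the first `n` values of `r` as a finite binary sequence. -/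
def rList (r : ℕ → Bool) (n : ℕ) : List Bool := (List.range n).map r

/-- The map `h_r : 𝕋 → 𝕋`. -/
noncomputable def hr (r : ℕ → Bool) : 𝕋 → 𝕋
  | FreeMagma.of _ => uSeq (rList r 1)
  | FreeMagma.mul a b =>
      if ll a b then hr r a * hr r b else uSeq (rList r (cnt a + cnt b))

/-- The action of `h_r` on measures: `h_r(μ)(f) = μ(f ∘ h_r)`. -/
noncomputable def hrM (r : ℕ → Bool) (φ : Bdd 𝕋 → ℝ) : Bdd 𝕋 → ℝ :=
  fun f => φ (liftBdd fun t => f.1 (hr r t))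

/-- `lev`: `l(1) = 0`, `l(aˆb) = l(a) + 1`. -/
def lev : 𝕋 → ℕ
  | FreeMagma.of _ => 0
  | FreeMagma.mul a _ => lev a + 1

/-- `C` is closed under `ˆ`. -/
def HClosed (C : Set (Bdd 𝕋 → ℝ)) : Prop := ∀ μ ∈ C, ∀ ν ∈ C, hmul μ ν ∈ C

/-!
For a set `J ⊆ 𝕋` such that `sˆt ∈ J` forces `s, t ∈ J`, one has
`(μˆν)(J) ≤ μ(J) ν(J)`. Hence the points of `C` where `μ ↦ μ(J)` attains its minimum `a`
form a nonempty compact convex `ˆ`-closed subset, which by minimality is all of `C`;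
applied to `μ₀ˆμ₀` this gives `a ≤ a²`, so `a ∈ {0, 1}`. The lower closure `J` of an
interval `I` and `J \ I` both have this property, and `μ(I) = μ(J) - μ(J \ I)`.
-/

section PrSet

variable {S : Type*}

lemma liftBdd_val {g : S → ℝ} (M : ℝ) (hg : ∀ s, |g s| ≤ M) : (liftBdd g).1 = g := by
  rw [show liftBdd g = ⟨g, M, hg⟩ from dif_pos ⟨M, hg⟩]

lemma indB_val (E : Set S) (s : S) : (indB E).1 s = if s ∈ E then 1 else 0 :=
  congrFun (liftBdd_val 1 fun t => by split <;> simp) s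

lemma abs_indB_val_le_one (E : Set S) (s : S) : |(indB E).1 s| ≤ 1 := by
  rw [indB_val]; split <;> simp

variable {μ : Bdd S → ℝ}

lemma PrSet.mono (hμ : μ ∈ PrSet S) {f g : Bdd S} (h : ∀ s, f.1 s ≤ g.1 s) : μ f ≤ μ g := by
  obtain ⟨M, hM⟩ := f.2
  obtain ⟨N, hN⟩ := g.2
  let d : Bdd S := ⟨fun s => g.1 s - f.1 s, M + N, fun s => by
    have := abs_sub (g.1 s) (f.1 s); linarith [hM s, hN s]⟩
  have hsplit : μ g = μ f + μ d := hμ.1 f d g fun s => by simp [d]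
  linarith [hμ.2.2.1 d fun s => sub_nonneg.2 (h s)]

lemma PrSet.map_eq_zero (hμ : μ ∈ PrSet S) {f : Bdd S} (h : ∀ s, f.1 s = 0) : μ f = 0 := by
  simpa using hμ.2.1 0 f f fun s => by simp [h s]

lemma PrSet.mE_nonneg (hμ : μ ∈ PrSet S) (E : Set S) : 0 ≤ mE μ E :=
  hμ.2.2.1 _ fun s => by rw [indB_val]; split <;> norm_num

lemma PrSet.mE_le_one (hμ : μ ∈ PrSet S) (E : Set S) : mE μ E ≤ 1 :=
  hμ.2.2.2 ▸ PrSet.mono hμ fun s => by rw [indB_val]; split <;> simp [constB]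

lemma PrSet.mE_diff_add (hμ : μ ∈ PrSet S) {I J : Set S} (hIJ : I ⊆ J) :
    mE μ (J \ I) + mE μ I = mE μ J :=
  (hμ.1 _ _ _ fun s => by
    simp only [indB_val, Set.mem_sdiff]
    by_cases hI : s ∈ I
    · simp [hI, hIJ hI]
    · by_cases hJ : s ∈ J <;> simp [hI, hJ]).symm

lemma PrSet.mE_starM_le_mul (op : S → S → S) {μ ν : Bdd S → ℝ} (hμ : μ ∈ PrSet S)
    (hν : ν ∈ PrSet S) {J : Set S} (hJ : ∀ x y, op x y ∈ J → x ∈ J ∧ y ∈ J) :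
    mE (starM op μ ν) J ≤ mE μ J * mE ν J := by
  set c := mE ν J
  have hc : 0 ≤ c ∧ c ≤ 1 := ⟨PrSet.mE_nonneg hν J, PrSet.mE_le_one hν J⟩
  set F : S → ℝ := fun x => ν (liftBdd fun y => (indB J).1 (op x y))
  have hsection (x y : S) :
      (liftBdd fun y => (indB J).1 (op x y)).1 y = if op x y ∈ J then 1 else 0 := by
    rw [liftBdd_val 1 fun y => abs_indB_val_le_one J (op x y)]
    exact indB_val J (op x y)
  have hF_nonneg (x : S) : 0 ≤ F x :=
    hν.2.2.1 _ fun y => by rw [hsection]; split <;> norm_num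
  have hF_le (x : S) : F x ≤ c * (indB J).1 x := by
    rw [indB_val]
    split_ifs with hx
    · rw [mul_one]
      exact PrSet.mono hν fun y => by
        rw [hsection, indB_val]
        split_ifs with h h'
        exacts [le_rfl, absurd (hJ x y h).2 h', zero_le_one, le_rfl]
    · rw [mul_zero]
      exact (PrSet.map_eq_zero hν fun y => by
        rw [hsection, if_neg fun h => hx (hJ x y h).1]).le
  have hF_abs (x : S) : |F x| ≤ 1 := by
    have := abs_indB_val_le_one J x
    rw [abs_of_nonneg (hF_nonneg x)]
    nlinarith [hF_le x, le_abs_self ((indB J).1 x)]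
  let g : Bdd S := ⟨fun x => c * (indB J).1 x, 1, fun x => by
    rw [abs_mul, abs_of_nonneg hc.1]
    nlinarith [abs_indB_val_le_one J x, abs_nonneg ((indB J).1 x)]⟩
  calc mE (starM op μ ν) J = μ (liftBdd F) := rfl
    _ ≤ μ g := PrSet.mono hμ fun x => by rw [liftBdd_val 1 hF_abs]; exact hF_le x
    _ = c * mE μ J := hμ.2.1 c _ _ fun _ => rfl
    _ = mE μ J * c := mul_comm _ _

lemma PrSet.mE_hmul_le_mul {μ ν : Bdd 𝕋 → ℝ} (hμ : μ ∈ PrSet 𝕋) (hν : ν ∈ PrSet 𝕋)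
    {J : Set 𝕋} (hJ : ∀ x y : 𝕋, x * y ∈ J → x ∈ J ∧ y ∈ J) :
    mE (hmul μ ν) J ≤ mE μ J * mE ν J :=
  PrSet.mE_starM_le_mul (· * ·) hμ hν hJ

end PrSet

structure IsMinimalHClosed (C : Set (Bdd 𝕋 → ℝ)) : Prop where
  nonempty : C.Nonempty
  isCompact : IsCompact C
  convex : Convex ℝ C
  hClosed : HClosed C
  eq_of_subset : ∀ D ⊆ C, D.Nonempty → IsCompact D → Convex ℝ D → HClosed D → D = C

namespace IsMinimalHClosed

variable {C : Set (Bdd 𝕋 → ℝ)} {J : Set 𝕋}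

lemma exists_mE_eq (hC : IsMinimalHClosed C) (hCPr : C ⊆ PrSet 𝕋)
    (hJ : ∀ x y : 𝕋, x * y ∈ J → x ∈ J ∧ y ∈ J) : ∃ a, ∀ μ ∈ C, mE μ J = a := by
  have hcont : Continuous fun μ : Bdd 𝕋 → ℝ => mE μ J := continuous_apply (indB J)
  obtain ⟨μ₀, hμ₀, hmin⟩ := hC.isCompact.exists_isMinOn hC.nonempty hcont.continuousOn
  set a := mE μ₀ J
  let D := C ∩ {μ | mE μ J ≤ a}
  have hD : D = C := hC.eq_of_subset D Set.inter_subset_left ⟨μ₀, hμ₀, (le_rfl : a ≤ a)⟩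
    (hC.isCompact.inter_right (isClosed_le hcont continuous_const))
    (hC.convex.inter (convex_halfSpace_le ⟨fun _ _ => rfl, fun _ _ => rfl⟩ a))
    fun μ hμ ν hν => ⟨hC.hClosed μ hμ.1 ν hν.1, calc
      mE (hmul μ ν) J ≤ mE μ J * mE ν J := PrSet.mE_hmul_le_mul (hCPr hμ.1) (hCPr hν.1) hJ
      _ ≤ mE μ J * 1 := mul_le_mul_of_nonneg_left (PrSet.mE_le_one (hCPr hν.1) J)
          (PrSet.mE_nonneg (hCPr hμ.1) J)
      _ ≤ a := (mul_one _).trans_le hμ.2⟩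
  refine ⟨a, fun μ hμ => le_antisymm ?_ (hmin hμ)⟩
  rw [← hD] at hμ
  exact hμ.2

lemma mE_eq_zero_or_one (hC : IsMinimalHClosed C) (hCPr : C ⊆ PrSet 𝕋)
    (hJ : ∀ x y : 𝕋, x * y ∈ J → x ∈ J ∧ y ∈ J) :
    (∀ μ ∈ C, mE μ J = 0) ∨ (∀ μ ∈ C, mE μ J = 1) := by
  obtain ⟨a, ha⟩ := hC.exists_mE_eq hCPr hJ
  obtain ⟨μ₀, hμ₀⟩ := hC.nonempty
  have hsq : a ≤ a * a := by
    simpa only [ha _ hμ₀, ha _ (hC.hClosed μ₀ hμ₀ μ₀ hμ₀)] using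
      PrSet.mE_hmul_le_mul (hCPr hμ₀) (hCPr hμ₀) hJ
  have h0 : 0 ≤ a := ha μ₀ hμ₀ ▸ PrSet.mE_nonneg (hCPr hμ₀) J
  have h1 : a ≤ 1 := ha μ₀ hμ₀ ▸ PrSet.mE_le_one (hCPr hμ₀) J
  rcases h0.eq_or_lt with rfl | hpos
  · exact Or.inl ha
  · exact Or.inr fun μ hμ => (ha μ hμ).trans (by nlinarith)

end IsMinimalHClosed

section LowerClosure

variable {M : Type*} {r : M → M → Prop} {I : Set M}

def lowerClosureRel (r : M → M → Prop) (I : Set M) : Set M := {t | ∃ u ∈ I, r t u}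

lemma subset_lowerClosureRel (hrefl : ∀ s, r s s) : I ⊆ lowerClosureRel r I :=
  fun s hs => ⟨s, hs, hrefl s⟩

variable [Mul M]

lemma mem_lowerClosureRel_of_mul_mem (htrans : ∀ a b c, r a b → r b c → r a c)
    (hle : ∀ s t, r s (s * t) ∧ r t (s * t)) {x y : M} (h : x * y ∈ lowerClosureRel r I) :
    x ∈ lowerClosureRel r I ∧ y ∈ lowerClosureRel r I :=
  let ⟨u, hu, hxyu⟩ := h
  ⟨⟨u, hu, htrans _ _ _ (hle x y).1 hxyu⟩, ⟨u, hu, htrans _ _ _ (hle x y).2 hxyu⟩⟩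

lemma mem_lowerClosureRel_diff_of_mul_mem (htrans : ∀ a b c, r a b → r b c → r a c)
    (hle : ∀ s t, r s (s * t) ∧ r t (s * t))
    (hI : ∀ s t u, r s t → r t u → s ∈ I → u ∈ I → t ∈ I) {x y : M}
    (h : x * y ∈ lowerClosureRel r I \ I) :
    x ∈ lowerClosureRel r I \ I ∧ y ∈ lowerClosureRel r I \ I := by
  obtain ⟨⟨u, hu, hxyu⟩, hxy⟩ := h
  obtain ⟨hx, hy⟩ := mem_lowerClosureRel_of_mul_mem htrans hle ⟨u, hu, hxyu⟩
  exact ⟨⟨hx, fun hxI => hxy (hI _ _ _ (hle x y).1 hxyu hxI hu)⟩,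
    ⟨hy, fun hyI => hxy (hI _ _ _ (hle x y).2 hxyu hyI hu)⟩⟩

end LowerClosure

theorem interval_zero_one_law_general (C : Set (Bdd 𝕋 → ℝ)) (hC : C ⊆ PrSet 𝕋)
    (hne : C.Nonempty) (hcomp : IsCompact C) (hconv : Convex ℝ C) (hcl : HClosed C)
    (hmin : ∀ D ⊆ C, D.Nonempty → IsCompact D → Convex ℝ D → HClosed D → D = C)
    (r : 𝕋 → 𝕋 → Prop)
    (hrefl : ∀ s, r s s)
    (htrans : ∀ a b c, r a b → r b c → r a c)
    (hop : ∀ s t : 𝕋, (r s (s * t) ∧ ¬ r (s * t) s) ∧ (r t (s * t) ∧ ¬ r (s * t) t))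
    (I : Set 𝕋) (hI : ∀ s t u : 𝕋, r s t → r t u → s ∈ I → u ∈ I → t ∈ I) :
    (∀ μ ∈ C, mE μ I = 1) ∨ (∀ μ ∈ C, mE μ I = 0) := by
  have hCmin : IsMinimalHClosed C := ⟨hne, hcomp, hconv, hcl, hmin⟩
  have hle (s t : 𝕋) : r s (s * t) ∧ r t (s * t) := ⟨(hop s t).1.1, (hop s t).2.1⟩
  set J := lowerClosureRel r I
  have hsplit (μ) (hμ : μ ∈ C) : mE μ (J \ I) + mE μ I = mE μ J :=
    PrSet.mE_diff_add (hC hμ) (subset_lowerClosureRel hrefl)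
  rcases hCmin.mE_eq_zero_or_one hC fun x y => mem_lowerClosureRel_of_mul_mem htrans hle
    with hJ | hJ
  · refine Or.inr fun μ hμ => ?_
    linarith [hsplit μ hμ, hJ μ hμ, PrSet.mE_nonneg (hC hμ) (J \ I), PrSet.mE_nonneg (hC hμ) I]
  rcases hCmin.mE_eq_zero_or_one hC fun x y => mem_lowerClosureRel_diff_of_mul_mem htrans hle hI
    with hJI | hJI
  · exact Or.inl fun μ hμ => by linarith [hsplit μ hμ, hJ μ hμ, hJI μ hμ]
  · exact Or.inr fun μ hμ => by linarith [hsplit μ hμ, hJ μ hμ, hJI μ hμ]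

/-- Claim 5.5: if `C ⊆ Pr(𝕋)` is minimal nonempty compact convex
`ˆ`-closed and `I` is an interval of a linear quasi-order `⪯` on `𝕋` with
`s, t ≺ sˆt`, then `μ(I) = 1` for all `μ ∈ C` or `μ(I) = 0` for all `μ ∈ C`. -/
theorem interval_zero_one_law (C : Set (Bdd 𝕋 → ℝ)) (hC : C ⊆ PrSet 𝕋)
    (hne : C.Nonempty) (hcomp : IsCompact C) (hconv : Convex ℝ C) (hcl : HClosed C)
    (hmin : ∀ D ⊆ C, D.Nonempty → IsCompact D → Convex ℝ D → HClosed D → D = C)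
    (r : 𝕋 → 𝕋 → Prop)
    (hrefl : ∀ s, r s s)
    (htrans : ∀ a b c, r a b → r b c → r a c)
    (htotal : ∀ s t, r s t ∨ r t s)
    (hop : ∀ s t : 𝕋, (r s (s * t) ∧ ¬ r (s * t) s) ∧ (r t (s * t) ∧ ¬ r (s * t) t))
    (I : Set 𝕋) (hI : ∀ s t u : 𝕋, r s t → r t u → s ∈ I → u ∈ I → t ∈ I) :
    (∀ μ ∈ C, mE μ I = 1) ∨ (∀ μ ∈ C, mE μ I = 0) :=
  interval_zero_one_law_general C hC hne hcomp hconv hcl hmin r hrefl htrans hop I hI
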